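/- Let n ≥ 1 and let W be a symmetric positive semidefinite real n×n matrix, let m ≥ 0 and ν ≥ 0 be integers, let a < b be real numbers and f : [a,b] → ℝ^n be continuously differentiable. Define q_{m,m+j}(x) = x^m · P_{m,j}(x) and, for 0 ≤ j ≤ ν, θ_{m,j} = f(b) − q_{m,m+j}(0)·f(a) − (1/(b-a)) · ∫_a^b q'_{m,m+j}((s-a)/(b-a)) · f(s) ds ∈ ℝ^n. Then ∫_a^b ((s-a)/(b-a))^m · f'(s)ᵀ W f'(s) ds ≥ (1/(b-a)) · Σ_{j=0}^{ν} (m+2j+1) · θ_{m,j}ᵀ W θ_{m,j}. -/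

import Mathlib

/-!
Write `u = (s - a)/(b - a)`. Integrating by parts and using `q_{m,m+j}(1) = P_{m,j}(1) = 1`, the
vectors `θ_{m,j}` are the moments `∫_a^b u^m P_{m,j}(u) f'(s) ds`. By the Rodrigues formula and `k`
integrations by parts, `x^m P_{m,k}` is orthogonal on `[0, 1]` to every polynomial of degree `< k`,
and a Beta integral gives `∫_0^1 x^m P_{m,k}^2 = 1/(m + 2k + 1)`. The claim is then Bessel's
inequality for `f'` and the functions `P_{m,j}(u)` in the positive semidefinite form
`⟨g, h⟩ = ∫_a^b u^m g(s)ᵀ W h(s) ds`, in which the cross terms of `P_{m,j}(u) θ_j` and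
`P_{m,k}(u) θ_k` factor as `(∫_a^b u^m P_{m,j}(u) P_{m,k}(u) ds) θ_jᵀ W θ_k`.
-/

open Polynomial Matrix MeasureTheory intervalIntegral Set Nat

namespace LinearMap.BilinForm

theorem sum_apply_self_le_of_orthogonal {R E ι : Type*} [CommRing R] [LinearOrder R]
    [IsStrictOrderedRing R] [AddCommGroup E] [Module R E]
    {β : LinearMap.BilinForm R E} (hβ : β.IsSymm) (hpos : ∀ x, 0 ≤ β x x) (s : Finset ι) (x : E)
    (y : ι → E) (horth : ∀ j ∈ s, ∀ k ∈ s, j ≠ k → β (y j) (y k) = 0)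
    (hproj : ∀ j ∈ s, β x (y j) = β (y j) (y j)) :
    ∑ j ∈ s, β (y j) (y j) ≤ β x x := by
  have hcross : β x (∑ j ∈ s, y j) = ∑ j ∈ s, β (y j) (y j) := by
    rw [sum_right]; exact Finset.sum_congr rfl hproj
  have hdiag : β (∑ j ∈ s, y j) (∑ j ∈ s, y j) = ∑ j ∈ s, β (y j) (y j) := by
    rw [sum_left]
    refine Finset.sum_congr rfl fun j hj => ?_
    rw [sum_right, Finset.sum_eq_single_of_mem j hj fun k hk hkj => horth j hj k hk hkj.symm]
  have := hpos (x - ∑ j ∈ s, y j)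
  rw [sub_left, sub_right, sub_right, hβ.eq (∑ j ∈ s, y j) x, hcross, hdiag] at this
  linarith

end LinearMap.BilinForm

theorem integral_pow_mul_one_sub_pow (a b : ℕ) :
    ∫ x in (0:ℝ)..1, x ^ a * (1 - x) ^ b = a ! * b ! / (a + b + 1)! := by
  induction b generalizing a with
  | zero =>
    simp only [pow_zero, mul_one, integral_pow, Nat.factorial_zero, add_zero,
      Nat.factorial_succ]
    push_cast
    field_simp
    simp
  | succ b ih =>
    have hibp := integral_mul_deriv_eq_deriv_mul (a := 0) (b := 1)
      (u := fun x : ℝ => (1 - x) ^ (b + 1)) (v := fun x : ℝ => x ^ (a + 1) / (a + 1))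
      (u' := fun x => -((b + 1) * (1 - x) ^ b)) (v' := fun x => x ^ a)
      (fun x _ => (((hasDerivAt_id x).const_sub 1).pow (b + 1)).congr_deriv (by simp))
      (fun x _ => ((hasDerivAt_pow (a + 1) x).div_const ((a : ℝ) + 1)).congr_deriv
        (by field_simp; simp))
      ((by fun_prop : Continuous _).intervalIntegrable _ _)
      ((by fun_prop : Continuous _).intervalIntegrable _ _)
    have hrec : ∫ x in (0:ℝ)..1, x ^ a * (1 - x) ^ (b + 1)
        = (b + 1) / (a + 1) * ∫ x in (0:ℝ)..1, x ^ (a + 1) * (1 - x) ^ b := by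
      rw [← intervalIntegral.integral_const_mul]
      simp only [mul_comm (_ ^ a), hibp, neg_mul, intervalIntegral.integral_neg]
      simp only [sub_self, zero_pow (succ_ne_zero _), zero_mul, zero_div, mul_zero, sub_zero,
        zero_sub, neg_neg]
      refine integral_congr fun x _ => ?_
      ring
    rw [hrec, ih (a + 1), show a + 1 + b + 1 = a + (b + 1) + 1 by ring]
    simp only [Nat.factorial_succ]
    push_cast
    field_simp

namespace Polynomial

theorem integral_eval_mul_eval_derivative (p g : ℝ[X]) (a b : ℝ) :
    ∫ x in a..b, p.eval x * (derivative g).eval x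
      = p.eval b * g.eval b - p.eval a * g.eval a
        - ∫ x in a..b, (derivative p).eval x * g.eval x :=
  integral_mul_deriv_eq_deriv_mul (fun x _ => p.hasDerivAt x) (fun x _ => g.hasDerivAt x)
    ((derivative p).continuous.intervalIntegrable _ _)
    ((derivative g).continuous.intervalIntegrable _ _)

theorem integral_eval_mul_eval_iterate_derivative (k : ℕ) (p g : ℝ[X]) {a b : ℝ}
    (ha : ∀ i < k, (derivative^[i] g).eval a = 0) (hb : ∀ i < k, (derivative^[i] g).eval b = 0) :
    ∫ x in a..b, p.eval x * (derivative^[k] g).eval x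
      = (-1) ^ k * ∫ x in a..b, (derivative^[k] p).eval x * g.eval x := by
  induction k generalizing p with
  | zero => simp
  | succ k ih =>
    rw [Function.iterate_succ_apply', integral_eval_mul_eval_derivative,
      ha k k.lt_succ_self, hb k k.lt_succ_self,
      ih (derivative p) (fun i hi => ha i (hi.trans k.lt_succ_self))
        (fun i hi => hb i (hi.trans k.lt_succ_self)), ← Function.iterate_succ_apply]
    ring

section CommRing

variable {R : Type*} [CommRing R]

theorem eval_iterate_derivative_eq_zero_of_pow_dvd {p : R[X]} {t : R} {n i : ℕ}
    (hdvd : (X - C t) ^ n ∣ p) (hi : i < n) : (derivative^[i] p).eval t = 0 :=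
  dvd_iff_isRoot.mp <| (dvd_pow_self _ (Nat.sub_ne_zero_of_lt hi)).trans
    (pow_sub_dvd_iterate_derivative_of_pow_dvd i hdvd)

theorem eval_iterate_derivative_mul_X_sub_C_pow_self (h : R[X]) (t : R) (k : ℕ) :
    (derivative^[k] (h * (X - C t) ^ k)).eval t = k ! * h.eval t := by
  rw [iterate_derivative_mul, eval_finsetSum,
    Finset.sum_eq_single_of_mem k (Finset.self_mem_range_succ k)]
  · simp [iterate_derivative_X_sub_pow_self, mul_comm]
  · intro j hj hjk
    have : k - j ≠ 0 := by have := Finset.mem_range_succ_iff.1 hj; omega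
    simp [iterate_derivative_X_sub_pow, this]

theorem iterate_derivative_eq_C_of_natDegree_le {p : R[X]} {k : ℕ} (hp : p.natDegree ≤ k) :
    derivative^[k] p = C (k ! * p.coeff k) := by
  have hdeg : (derivative^[k] p).natDegree = 0 := by
    have := natDegree_iterate_derivative p k
    omega
  rw [eq_C_of_natDegree_eq_zero hdeg, coeff_iterate_derivative, zero_add, Nat.descFactorial_self,
    nsmul_eq_mul]

end CommRing

end Polynomial

/-- `rodrigues m k` is `x^m P_{m,k}`, the paper's `q_{m,m+k}`. -/
noncomputable def rodrigues (m k : ℕ) : ℝ[X] :=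
  C (1 / (k ! : ℝ)) * derivative^[k] (X ^ (m + k) * (X - 1) ^ k)

theorem natDegree_rodrigues_le (m k : ℕ) : (rodrigues m k).natDegree ≤ m + k := by
  refine natDegree_C_mul_le _ _ |>.trans <| (natDegree_iterate_derivative _ k).trans ?_
  have := natDegree_mul_le (p := (X : ℝ[X]) ^ (m + k)) (q := (X - 1) ^ k)
  have := natDegree_pow_le (p := (X : ℝ[X]) - 1) (n := k)
  have : ((X : ℝ[X]) - 1).natDegree = 1 := by simpa using natDegree_X_sub_C (1 : ℝ)
  simp_all

theorem coeff_rodrigues (m k : ℕ) : (rodrigues m k).coeff (m + k) = (m + 2 * k).choose k := by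
  have hlead : ((X : ℝ[X]) ^ (m + k) * (X - 1) ^ k).coeff (m + 2 * k) = 1 := by
    rw [show m + 2 * k = k + (m + k) by ring, coeff_X_pow_mul', if_pos le_add_self,
      add_tsub_cancel_right]
    have hmonic : ((X - C 1 : ℝ[X]) ^ k).Monic := (monic_X_sub_C 1).pow k
    have := hmonic.coeff_natDegree
    rwa [natDegree_pow, natDegree_X_sub_C, mul_one, C_1] at this
  rw [rodrigues, coeff_C_mul, coeff_iterate_derivative, show m + k + k = m + 2 * k by ring, hlead,
    Nat.descFactorial_eq_factorial_mul_choose]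
  field_simp
  simp

theorem eval_one_rodrigues (m k : ℕ) : (rodrigues m k).eval 1 = 1 := by
  have := eval_iterate_derivative_mul_X_sub_C_pow_self ((X : ℝ[X]) ^ (m + k)) 1 k
  rw [C_1] at this
  simp [rodrigues, this]
  field_simp

theorem integral_eval_mul_eval_rodrigues (m : ℕ) {k : ℕ} {p : ℝ[X]} (hp : p.natDegree ≤ k) :
    ∫ x in (0:ℝ)..1, p.eval x * (rodrigues m k).eval x
      = p.coeff k * ((m + k)! * k ! / (m + 2 * k + 1)!) := by
  set g : ℝ[X] := X ^ (m + k) * (X - 1) ^ k with hg_def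
  have hg0 : ∀ i < k, (derivative^[i] g).eval 0 = 0 := fun i hi =>
    eval_iterate_derivative_eq_zero_of_pow_dvd (n := m + k)
      (by rw [C_0, sub_zero]; exact dvd_mul_right _ _) (by omega)
  have hg1 : ∀ i < k, (derivative^[i] g).eval 1 = 0 := fun i hi =>
    eval_iterate_derivative_eq_zero_of_pow_dvd (by rw [C_1]; exact dvd_mul_left _ _) hi
  have hint_g : ∫ x in (0:ℝ)..1, g.eval x = (-1) ^ k * ((m + k)! * k ! / (m + 2 * k + 1)!) := by
    rw [show m + 2 * k + 1 = m + k + k + 1 by ring, ← integral_pow_mul_one_sub_pow,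
      ← intervalIntegral.integral_const_mul]
    refine integral_congr fun x _ => ?_
    simp only [hg_def, eval_mul, eval_pow, eval_X, eval_sub, eval_one]
    rw [show x - 1 = -1 * (1 - x) by ring, mul_pow]
    ring
  calc ∫ x in (0:ℝ)..1, p.eval x * (rodrigues m k).eval x
      = 1 / k ! * ∫ x in (0:ℝ)..1, p.eval x * (derivative^[k] g).eval x := by
        rw [← intervalIntegral.integral_const_mul]
        refine integral_congr fun x _ => ?_
        simp only [rodrigues, eval_mul, eval_C]
        ring
    _ = 1 / k ! * ((-1) ^ k * (k ! * p.coeff k * ∫ x in (0:ℝ)..1, g.eval x)) := by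
        rw [integral_eval_mul_eval_iterate_derivative k p g hg0 hg1,
          iterate_derivative_eq_C_of_natDegree_le hp]
        simp only [eval_C, intervalIntegral.integral_const_mul]
    _ = p.coeff k * ((m + k)! * k ! / (m + 2 * k + 1)!) := by
        rw [hint_g]
        field_simp
        rw [← pow_mul, mul_comm k, pow_mul]
        simp

section RodriguesQuotient

variable {m k : ℕ} {p : ℝ[X]}

theorem natDegree_le_of_X_pow_mul_eq_rodrigues (hp : X ^ m * p = rodrigues m k) :
    p.natDegree ≤ k := by
  rcases eq_or_ne p 0 with rfl | hp0
  · simp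
  have := natDegree_rodrigues_le m k
  rwa [← hp, natDegree_mul (pow_ne_zero m X_ne_zero) hp0, natDegree_X_pow, add_le_add_iff_left]
    at this

theorem coeff_eq_choose_of_X_pow_mul_eq_rodrigues (hp : X ^ m * p = rodrigues m k) :
    p.coeff k = (m + 2 * k).choose k := by
  rw [← coeff_X_pow_mul p m k, hp, add_comm, coeff_rodrigues]

theorem eval_one_eq_one_of_X_pow_mul_eq_rodrigues (hp : X ^ m * p = rodrigues m k) :
    p.eval 1 = 1 := by
  simpa [← hp] using eval_one_rodrigues m k

end RodriguesQuotient

theorem integral_pow_mul_eval_mul_eval_of_rodrigues {m j k : ℕ} {p r : ℝ[X]}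
    (hp : X ^ m * p = rodrigues m j) (hr : X ^ m * r = rodrigues m k) :
    ∫ x in (0:ℝ)..1, x ^ m * (p.eval x * r.eval x)
      = if j = k then 1 / ((m : ℝ) + 2 * k + 1) else 0 := by
  wlog hjk : j ≤ k generalizing j k p r
  · simp_rw [mul_comm (p.eval _), this hr hp (le_of_not_ge hjk), eq_comm (a := k)]
    split_ifs with h <;> simp [h]
  have hr_eval : ∀ x : ℝ, x ^ m * r.eval x = (rodrigues m k).eval x := fun x => by
    simp [← hr]
  simp_rw [mul_left_comm _ (p.eval _), hr_eval]
  rw [integral_eval_mul_eval_rodrigues m ((natDegree_le_of_X_pow_mul_eq_rodrigues hp).trans hjk)]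
  split_ifs with h
  · subst h
    rw [coeff_eq_choose_of_X_pow_mul_eq_rodrigues hp]
    have hchoose := Nat.choose_mul_factorial_mul_factorial (show j ≤ m + 2 * j by omega)
    rw [show m + 2 * j - j = m + j by omega] at hchoose
    have hchoose_pos : ((m + 2 * j).choose j : ℝ) ≠ 0 := by
      exact_mod_cast (Nat.choose_pos (by omega)).ne'
    rw [Nat.factorial_succ, ← hchoose]
    push_cast
    field_simp
  · rw [coeff_eq_zero_of_natDegree_lt
      ((natDegree_le_of_X_pow_mul_eq_rodrigues hp).trans_lt (lt_of_le_of_ne hjk h)), zero_mul]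

theorem integral_comp_div_sub_div (g : ℝ → ℝ) {a b : ℝ} (hab : a ≠ b) :
    ∫ s in a..b, g ((s - a) / (b - a)) = (b - a) * ∫ x in (0:ℝ)..1, g x := by
  have hba : b - a ≠ 0 := sub_ne_zero.2 hab.symm
  simp_rw [sub_div]
  rw [integral_comp_div_sub _ hba, sub_self, div_sub_div_same, div_self hba, smul_eq_mul]

theorem integral_eval_comp_div_sub_mul_deriv (p : ℝ[X]) {a b : ℝ} (hab : a < b) {g g' : ℝ → ℝ}
    (hg : ∀ s ∈ Icc a b, HasDerivAt g (g' s) s) (hg' : ContinuousOn g' (Icc a b)) :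
    ∫ s in a..b, p.eval ((s - a) / (b - a)) * g' s
      = p.eval 1 * g b - p.eval 0 * g a
        - 1 / (b - a) * ∫ s in a..b, (derivative p).eval ((s - a) / (b - a)) * g s := by
  have hba : b - a ≠ 0 := (sub_pos.2 hab).ne'
  have hu : ∀ s, HasDerivAt (fun t => p.eval ((t - a) / (b - a)))
      ((derivative p).eval ((s - a) / (b - a)) * (1 / (b - a))) s := fun s =>
    (p.hasDerivAt _).comp s (((hasDerivAt_id s).sub_const a).div_const (b - a) |>.congr_deriv
      (by simp))
  rw [integral_mul_deriv_eq_deriv_mul (fun s _ => hu s)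
      (fun s hs => hg s (by rwa [uIcc_of_le hab.le] at hs))
      ((by fun_prop : Continuous _).intervalIntegrable _ _)
      ((uIcc_of_le hab.le ▸ hg').intervalIntegrable),
    sub_self, zero_div, div_self hba, ← intervalIntegral.integral_const_mul]
  simp_rw [mul_comm (1 / (b - a)), mul_assoc, mul_comm (1 / (b - a))]

theorem ContinuousOn.exists_continuousMap_eqOn_Icc {α β : Type*} [LinearOrder α]
    [TopologicalSpace α] [OrderTopology α] [TopologicalSpace β] {a b : α} {f : α → β}
    (hf : ContinuousOn f (Icc a b)) (hab : a ≤ b) : ∃ g : C(α, β), EqOn g f (Icc a b) :=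
  ⟨⟨IccExtend hab ((Icc a b).domRestrict f), hf.domRestrict.Icc_extend'⟩,
    fun _ hs => IccExtend_of_mem hab ((Icc a b).domRestrict f) hs⟩

theorem integral_div_sub_div_pow_mul_eval_mul_eval_of_rodrigues {m j k : ℕ} {p r : ℝ[X]}
    (hp : X ^ m * p = rodrigues m j) (hr : X ^ m * r = rodrigues m k) {a b : ℝ} (hab : a ≠ b) :
    ∫ s in a..b, ((s - a) / (b - a)) ^ m * (p.eval ((s - a) / (b - a)) * r.eval ((s - a) / (b - a)))
      = if j = k then (b - a) / ((m : ℝ) + 2 * j + 1) else 0 := by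
  rw [integral_comp_div_sub_div (fun t => t ^ m * (p.eval t * r.eval t)) hab,
    integral_pow_mul_eval_mul_eval_of_rodrigues hp hr]
  split_ifs with h
  · rw [h, mul_one_div]
  · rw [mul_zero]

theorem integral_div_sub_div_pow_mul_eval_mul_deriv_of_rodrigues {m j : ℕ} {p : ℝ[X]}
    (hp : X ^ m * p = rodrigues m j) {a b : ℝ} (hab : a < b) {g g' : ℝ → ℝ}
    (hg : ∀ s ∈ Icc a b, HasDerivAt g (g' s) s) (hg' : ContinuousOn g' (Icc a b)) :
    ∫ s in a..b, ((s - a) / (b - a)) ^ m * p.eval ((s - a) / (b - a)) * g' s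
      = g b - (X ^ m * p).eval 0 * g a
        - 1 / (b - a) * ∫ s in a..b, (derivative (X ^ m * p)).eval ((s - a) / (b - a)) * g s := by
  have h1 : (X ^ m * p).eval 1 = 1 := by
    rw [eval_mul, eval_pow, eval_X, one_pow, one_mul, eval_one_eq_one_of_X_pow_mul_eq_rodrigues hp]
  have hibp := integral_eval_comp_div_sub_mul_deriv (X ^ m * p) hab hg hg'
  rw [h1, one_mul] at hibp
  rw [← hibp]
  simp only [eval_mul, eval_pow, eval_X]

section WeightedForm

variable {ι : Type*} [Fintype ι] (W : Matrix ι ι ℝ) (w : C(ℝ, ℝ)) (a b : ℝ)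

theorem intervalIntegrable_weight_mul_dotProduct_mulVec (g h : C(ℝ, ι → ℝ)) :
    IntervalIntegrable (fun s => w s * (g s ⬝ᵥ W *ᵥ h s)) volume a b :=
  (w.continuous.mul (g.continuous.dotProduct (continuous_const.matrix_mulVec h.continuous))
    ).intervalIntegrable a b

noncomputable def weightedForm : LinearMap.BilinForm ℝ C(ℝ, ι → ℝ) :=
  LinearMap.mk₂ ℝ (fun g h => ∫ s in a..b, w s * (g s ⬝ᵥ W *ᵥ h s))
    (fun g₁ g₂ h => by
      simp only [ContinuousMap.add_apply, add_dotProduct, mul_add]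
      exact integral_add (intervalIntegrable_weight_mul_dotProduct_mulVec ..)
        (intervalIntegrable_weight_mul_dotProduct_mulVec ..))
    (fun c g h => by
      simp only [ContinuousMap.smul_apply, smul_dotProduct, smul_eq_mul, mul_left_comm _ c]
      exact intervalIntegral.integral_const_mul ..)
    (fun g h₁ h₂ => by
      simp only [ContinuousMap.add_apply, mulVec_add, dotProduct_add, mul_add]
      exact integral_add (intervalIntegrable_weight_mul_dotProduct_mulVec ..)
        (intervalIntegrable_weight_mul_dotProduct_mulVec ..))
    (fun c g h => by
      simp only [ContinuousMap.smul_apply, mulVec_smul, dotProduct_smul, smul_eq_mul,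
        mul_left_comm _ c]
      exact intervalIntegral.integral_const_mul ..)

variable {W w a b}

theorem weightedForm_apply (g h : C(ℝ, ι → ℝ)) :
    weightedForm W w a b g h = ∫ s in a..b, w s * (g s ⬝ᵥ W *ᵥ h s) :=
  rfl

theorem isSymm_weightedForm (hW : W.IsSymm) : (weightedForm W w a b).IsSymm :=
  ⟨fun g h => integral_congr fun s _ => by
    simp only [dotProduct_mulVec, ← mulVec_transpose, hW.eq, dotProduct_comm (h s)]⟩

theorem weightedForm_self_nonneg (hab : a ≤ b) (hw : ∀ s ∈ Icc a b, 0 ≤ w s)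
    (hW : ∀ v, 0 ≤ v ⬝ᵥ W *ᵥ v) (g : C(ℝ, ι → ℝ)) : 0 ≤ weightedForm W w a b g g :=
  integral_nonneg hab fun s hs => mul_nonneg (hw s hs) (hW _)

theorem weightedForm_smul_const_right (g : C(ℝ, ι → ℝ)) (ψ : C(ℝ, ℝ)) (v : ι → ℝ) :
    weightedForm W w a b g (ψ • ContinuousMap.const ℝ v)
      = (fun i => ∫ s in a..b, w s * ψ s * g s i) ⬝ᵥ W *ᵥ v := by
  simp only [weightedForm_apply, ContinuousMap.smul_apply', ContinuousMap.const_apply,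
    mulVec_smul, dotProduct, ← intervalIntegral.integral_mul_const]
  rw [← intervalIntegral.integral_finsetSum fun i _ =>
    ((by fun_prop : Continuous _).intervalIntegrable a b)]
  refine integral_congr fun s _ => ?_
  simp only [Pi.smul_apply, smul_eq_mul, Finset.mul_sum]
  exact Finset.sum_congr rfl fun i _ => by ring

theorem weightedForm_smul_const (ρ ψ : C(ℝ, ℝ)) (v v' : ι → ℝ) :
    weightedForm W w a b (ρ • ContinuousMap.const ℝ v) (ψ • ContinuousMap.const ℝ v')
      = (∫ s in a..b, w s * (ρ s * ψ s)) * (v ⬝ᵥ W *ᵥ v') := by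
  rw [weightedForm_smul_const_right]
  simp only [ContinuousMap.smul_apply', Pi.smul_apply, ContinuousMap.const_apply, smul_eq_mul,
    ← mul_assoc, intervalIntegral.integral_mul_const]
  simp_rw [mul_right_comm (w _) (ψ _)]
  exact smul_dotProduct (∫ s in a..b, w s * ρ s * ψ s) v _

theorem sum_dotProduct_mulVec_div_le_weightedForm {κ : Type*} [DecidableEq κ] (hW : W.IsSymm)
    (hWpsd : ∀ v, 0 ≤ v ⬝ᵥ W *ᵥ v) (hab : a ≤ b) (hw : ∀ s ∈ Icc a b, 0 ≤ w s) (J : Finset κ)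
    (ρ : κ → C(ℝ, ℝ)) (d : κ → ℝ)
    (horth : ∀ j ∈ J, ∀ k ∈ J, ∫ s in a..b, w s * (ρ j s * ρ k s) = if j = k then d j else 0)
    (x : C(ℝ, ι → ℝ)) (θ : κ → ι → ℝ)
    (hθ : ∀ j ∈ J, (fun i => ∫ s in a..b, w s * ρ j s * x s i) = θ j) :
    ∑ j ∈ J, θ j ⬝ᵥ W *ᵥ θ j / d j ≤ weightedForm W w a b x x := by
  let y j := ρ j • ContinuousMap.const ℝ ((d j)⁻¹ • θ j)
  have hdiag : ∀ j ∈ J, weightedForm W w a b (y j) (y j) = θ j ⬝ᵥ W *ᵥ θ j / d j := by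
    intro j hj
    rw [weightedForm_smul_const, horth j hj j hj, if_pos rfl, smul_dotProduct, mulVec_smul,
      dotProduct_smul, smul_eq_mul, smul_eq_mul]
    rcases eq_or_ne (d j) 0 with h | h
    · simp [h]
    · field_simp
  rw [← Finset.sum_congr rfl hdiag]
  refine LinearMap.BilinForm.sum_apply_self_le_of_orthogonal (isSymm_weightedForm hW)
    (weightedForm_self_nonneg hab hw hWpsd) J x y
    (fun j hj k hk hjk => by rw [weightedForm_smul_const, horth j hj k hk, if_neg hjk, zero_mul])
    (fun j hj => ?_)
  rw [hdiag j hj, weightedForm_smul_const_right, hθ j hj, mulVec_smul, dotProduct_smul,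
    smul_eq_mul, inv_mul_eq_div]

end WeightedForm

theorem stmt_13_general (P : ℕ → ℕ → Polynomial ℝ)
    (hP0 : ∀ m, P m 0 = 1)
    (hP : ∀ m n, 1 ≤ n →
      (X : Polynomial ℝ) ^ m * P m n
        = C (1 / (n.factorial : ℝ)) *
            derivative^[n] (X ^ (m + n) * (X - 1) ^ n))
    (n : ℕ)
    (W : Matrix (Fin n) (Fin n) ℝ) (hWsym : W.IsSymm)
    (hWpsd : ∀ v : Fin n → ℝ, 0 ≤ v ⬝ᵥ W.mulVec v)
    (m ν : ℕ) (a b : ℝ) (hab : a < b)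
    (f f' : ℝ → Fin n → ℝ)
    (hf : ∀ s ∈ Set.Icc a b, HasDerivAt f (f' s) s)
    (hf' : ContinuousOn f' (Set.Icc a b))
    (q : ℕ → Polynomial ℝ) (hq : ∀ j, q j = (X : Polynomial ℝ) ^ m * P m j)
    (θ : ℕ → Fin n → ℝ)
    (hθ : ∀ j i, θ j i =
      f b i - (q j).eval 0 * f a i
        - (1 / (b - a)) *
            ∫ s in a..b, (q j).derivative.eval ((s - a) / (b - a)) * f s i) :
    (1 / (b - a)) * ∑ j ∈ Finset.range (ν + 1),
        ((m : ℝ) + 2 * j + 1) * (θ j ⬝ᵥ W.mulVec (θ j))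
      ≤ ∫ s in a..b, ((s - a) / (b - a)) ^ m * (f' s ⬝ᵥ W.mulVec (f' s)) := by
  have hPX : ∀ k, X ^ m * P m k = rodrigues m k := fun k => by
    rcases k.eq_zero_or_pos with rfl | hk
    · simp [rodrigues, hP0]
    · exact hP m k hk
  let u : C(ℝ, ℝ) := ⟨fun s => (s - a) / (b - a), by fun_prop⟩
  let ρ j : C(ℝ, ℝ) := ⟨fun s => (P m j).eval (u s), by fun_prop⟩
  obtain ⟨x, hx⟩ := hf'.exists_continuousMap_eqOn_Icc hab.le
  have hθx : ∀ j ∈ Finset.range (ν + 1),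
      (fun i => ∫ s in a..b, (u ^ m) s * ρ j s * x s i) = θ j := fun j _ => funext fun i => by
    rw [hθ, hq, ← integral_div_sub_div_pow_mul_eval_mul_deriv_of_rodrigues (hPX j) hab
      (fun s hs => hasDerivAt_pi.1 (hf s hs) i) ((continuous_apply i).comp_continuousOn hf')]
    refine integral_congr fun s hs => ?_
    rw [uIcc_of_le hab.le] at hs
    simp [u, ρ, hx hs]
  have key := sum_dotProduct_mulVec_div_le_weightedForm hWsym hWpsd hab.le
    (fun s hs => pow_nonneg (div_nonneg (sub_nonneg.2 hs.1) (sub_pos.2 hab).le) m)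
    (Finset.range (ν + 1)) ρ (fun j => (b - a) / ((m : ℝ) + 2 * j + 1))
    (fun j _ k _ => integral_div_sub_div_pow_mul_eval_mul_eval_of_rodrigues (hPX j) (hPX k) hab.ne)
    x θ hθx
  calc _ = ∑ j ∈ Finset.range (ν + 1), θ j ⬝ᵥ W *ᵥ θ j / ((b - a) / ((m : ℝ) + 2 * j + 1)) := by
        rw [Finset.mul_sum]
        exact Finset.sum_congr rfl fun j _ => by field_simp
    _ ≤ _ := key
    _ = _ := integral_congr fun s hs => by
        rw [uIcc_of_le hab.le] at hs
        simp [u, hx hs]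

/-- Lemma 3 of the paper (integral inequality for derivatives): with
`q_{m,m+j}(x) = x^m P_{m,j}(x)` and
`θ_{m,j} = f(b) − q_{m,m+j}(0) f(a) − (1/(b-a)) ∫_a^b q'_{m,m+j}((s-a)/(b-a)) f(s) ds`,
`∫_a^b ((s-a)/(b-a))^m f'(s)ᵀ W f'(s) ds
  ≥ (1/(b-a)) ∑_{j=0}^ν (m+2j+1) θ_{m,j}ᵀ W θ_{m,j}`. -/
theorem stmt_13 (P : ℕ → ℕ → Polynomial ℝ)
    (hP0 : ∀ m, P m 0 = 1)
    (hP : ∀ m n, 1 ≤ n →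
      (X : Polynomial ℝ) ^ m * P m n
        = C (1 / (n.factorial : ℝ)) *
            derivative^[n] (X ^ (m + n) * (X - 1) ^ n))
    (n : ℕ) (hn : 1 ≤ n)
    (W : Matrix (Fin n) (Fin n) ℝ) (hWsym : W.IsSymm)
    (hWpsd : ∀ v : Fin n → ℝ, 0 ≤ v ⬝ᵥ W.mulVec v)
    (m ν : ℕ) (a b : ℝ) (hab : a < b)
    (f f' : ℝ → Fin n → ℝ)
    (hf : ∀ s ∈ Set.Icc a b, HasDerivAt f (f' s) s)
    (hf' : ContinuousOn f' (Set.Icc a b))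
    (q : ℕ → Polynomial ℝ) (hq : ∀ j, q j = (X : Polynomial ℝ) ^ m * P m j)
    (θ : ℕ → Fin n → ℝ)
    (hθ : ∀ j i, θ j i =
      f b i - (q j).eval 0 * f a i
        - (1 / (b - a)) *
            ∫ s in a..b, (q j).derivative.eval ((s - a) / (b - a)) * f s i) :
    (1 / (b - a)) * ∑ j ∈ Finset.range (ν + 1),
        ((m : ℝ) + 2 * j + 1) * (θ j ⬝ᵥ W.mulVec (θ j))
      ≤ ∫ s in a..b, ((s - a) / (b - a)) ^ m * (f' s ⬝ᵥ W.mulVec (f' s)) :=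
  stmt_13_general P hP0 hP n W hWsym hWpsd m ν a b hab f f' hf hf' q hq θ hθ
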